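/- arXiv:0805.4704 — 2 statements merged into one kernel-verified Lean document; each statement's English description precedes it below -/
import Mathlib

section
/- Let s < u, let f : [s, u] → ℝ be càdlàg (right-continuous with left limits f(t−)), and let h : ℝ → ℝ be continuous and bounded with h(0) = 0. For each n, let πₙ = {s = t₀ⁿ < t₁ⁿ < ⋯ < t_{kₙ}ⁿ = u} be a partition of [s, u] with mesh |πₙ| = max_j (t_jⁿ − t_{j−1}ⁿ) → 0 as n → ∞. Then ∫_s^u ( Σ_j 1_{(t_{j−1}ⁿ, t_jⁿ]}(t) · h(f(t_jⁿ) − f(t_{j−1}ⁿ)) )² dt → 0 as n → ∞. -/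
/-!
The integrand is bounded by `(sup |h|)²`, so by dominated convergence it suffices to show that it
tends to `0` at almost every `τ`. At a given `τ` the sum is `h (f b - f a)`, where `(a, b]` is the
cell of `πₙ` containing `τ`; as the mesh shrinks, `a → τ⁻` and `b → τ⁺`, so the sum tends to
`h (f τ - f τ⁻)`. This vanishes unless `τ` is a jump of `f`, and a càdlàg function has only
countably many jumps: for each `ε > 0`, right continuity at a jump of size `≥ ε` leaves an open
interval to its right free of such jumps.
-/

open Filter Set MeasureTheory Topology

section Jumps

variable {E : Type*} [MetricSpace E] {f fl : ℝ → E} {s u : ℝ}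

theorem exists_gt_forall_Ioo_dist_leftLim_lt
    (hright : ∀ t ∈ Ico s u, Tendsto f (𝓝[≥] t) (𝓝 (f t)))
    (hleft : ∀ t ∈ Ioc s u, Tendsto f (𝓝[<] t) (𝓝 (fl t)))
    {x : ℝ} (hx : x ∈ Ico s u) {ε : ℝ} (hε : 0 < ε) :
    ∃ y > x, ∀ z ∈ Ioo x y, dist (f z) (fl z) < ε := by
  obtain ⟨y, hxy, hy⟩ := mem_nhdsGE_iff_exists_Ico_subset.1
    ((hright x hx).eventually (Metric.ball_mem_nhds (f x) (half_pos hε)))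
  refine ⟨min y u, lt_min hxy hx.2, fun z hz => ?_⟩
  have hzu : z ∈ Ioc s u := ⟨hx.1.trans_lt hz.1, hz.2.le.trans (min_le_right _ _)⟩
  -- `fl z` is a limit of values `f w` with `w ∈ (x, z)`, all within `ε / 2` of `f x`.
  have hfl : dist (fl z) (f x) ≤ ε / 2 := by
    refine le_of_tendsto ((hleft z hzu).dist tendsto_const_nhds) ?_
    filter_upwards [Ioo_mem_nhdsLT hz.1] with w hw
    exact (hy ⟨hw.1.le, hw.2.trans (hz.2.trans_le (min_le_left _ _))⟩).le
  have hf : dist (f z) (f x) < ε / 2 := hy ⟨hz.1.le, hz.2.trans_le (min_le_left _ _)⟩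
  calc dist (f z) (fl z) ≤ dist (f z) (f x) + dist (fl z) (f x) := dist_triangle_right _ _ _
    _ < ε := by linarith

theorem countable_setOf_ne_leftLim
    (hright : ∀ t ∈ Ico s u, Tendsto f (𝓝[≥] t) (𝓝 (f t)))
    (hleft : ∀ t ∈ Ioc s u, Tendsto f (𝓝[<] t) (𝓝 (fl t))) :
    {x ∈ Ioo s u | f x ≠ fl x}.Countable := by
  have hjumps (ε : ℝ) (hε : 0 < ε) : {x ∈ Ioo s u | ε ≤ dist (f x) (fl x)}.Countable := by
    set S := {x ∈ Ioo s u | ε ≤ dist (f x) (fl x)}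
    have hisolated : ∀ x ∈ S, 𝓝[S ∩ Ioi x] x = ⊥ := fun x hx => by
      obtain ⟨y, hxy, hy⟩ :=
        exists_gt_forall_Ioo_dist_leftLim_lt hright hleft ⟨hx.1.1.le, hx.1.2⟩ hε
      rw [← empty_mem_iff_bot, mem_nhdsWithin]
      exact ⟨Iio y, isOpen_Iio, hxy, fun z ⟨hzy, hzS, hxz⟩ => (hy z ⟨hxz, hzy⟩).not_ge hzS.2⟩
    exact (countable_setOfPred_isolated_right_within (s := S)).mono fun x hx =>
      mem_sep hx (hisolated x hx)
  refine (countable_iUnion fun m : ℕ => hjumps (1 / (m + 1)) Nat.one_div_pos_of_nat).mono ?_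
  rintro x ⟨hx, hne⟩
  obtain ⟨m, hm⟩ := exists_nat_one_div_lt (dist_pos.2 hne)
  exact mem_iUnion.2 ⟨m, hx, hm.le⟩

end Jumps

theorem tendsto_nhdsLT_and_nhdsGE_of_mem_Ioc {ι : Type*} {l : Filter ι} {a b : ι → ℝ} {τ : ℝ}
    (hab : ∀ i, τ ∈ Ioc (a i) (b i)) (hlen : ∀ ε > 0, ∀ᶠ i in l, b i - a i < ε) :
    Tendsto a l (𝓝[<] τ) ∧ Tendsto b l (𝓝[≥] τ) := by
  refine ⟨tendsto_nhdsWithin_iff.2 ⟨Metric.tendsto_nhds.2 fun ε hε => ?_,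
      .of_forall fun i => (hab i).1⟩,
    tendsto_nhdsWithin_iff.2 ⟨Metric.tendsto_nhds.2 fun ε hε => ?_,
      .of_forall fun i => (hab i).2⟩⟩ <;>
  filter_upwards [hlen ε hε] with i hi <;>
  rw [Real.dist_eq, abs_lt] <;> constructor <;> linarith [(hab i).1, (hab i).2]

section Partition

variable {α : Type*} [LinearOrder α] {t : ℕ → α} {k j : ℕ} {τ : α}

theorem exists_lt_mem_Ioc_succ (hτ : τ ∈ Ioc (t 0) (t k)) :
    ∃ j < k, τ ∈ Ioc (t j) (t (j + 1)) := by
  induction k with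
  | zero => exact absurd hτ.2 hτ.1.not_ge
  | succ k ih =>
    by_cases hτk : τ ≤ t k
    · obtain ⟨j, hjk, hj⟩ := ih ⟨hτ.1, hτk⟩
      exact ⟨j, hjk.trans k.lt_succ_self, hj⟩
    · exact ⟨k, k.lt_succ_self, not_le.1 hτk, hτ.2⟩

theorem sum_indicator_Ioc_succ_eq_of_mem {M : Type*} [AddCommMonoid M]
    (ht : MonotoneOn t (Iic k)) (g : ℕ → M) (hjk : j < k) (hτ : τ ∈ Ioc (t j) (t (j + 1))) :
    ∑ i ∈ Finset.range k, (Ioc (t i) (t (i + 1))).indicator (fun _ => g i) τ = g j := by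
  rw [Finset.sum_eq_single_of_mem j (Finset.mem_range.2 hjk), indicator_of_mem hτ]
  intro i hi hij
  refine indicator_of_notMem (fun hτi => ?_) _
  have hik : i < k := Finset.mem_range.1 hi
  rcases hij.lt_or_gt with hij | hji
  · exact hτ.1.not_ge (hτi.2.trans (ht (mem_Iic.2 hik) (mem_Iic.2 hjk.le) hij))
  · exact hτi.1.not_ge (hτ.2.trans (ht (mem_Iic.2 hjk) (mem_Iic.2 hik.le) hji))

theorem norm_sum_indicator_Ioc_succ_le {E : Type*} [SeminormedAddCommGroup E]
    (ht : MonotoneOn t (Iic k)) {g : ℕ → E} {C : ℝ} (hg : ∀ i, ‖g i‖ ≤ C) (τ : α) :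
    ‖∑ i ∈ Finset.range k, (Ioc (t i) (t (i + 1))).indicator (fun _ => g i) τ‖ ≤ C := by
  by_cases hτ : ∃ j < k, τ ∈ Ioc (t j) (t (j + 1))
  · obtain ⟨j, hjk, hj⟩ := hτ
    rw [sum_indicator_Ioc_succ_eq_of_mem ht g hjk hj]
    exact hg j
  · push Not at hτ
    rw [Finset.sum_eq_zero fun i hi => indicator_of_notMem (hτ i (Finset.mem_range.1 hi)) _,
      norm_zero]
    exact (norm_nonneg _).trans (hg 0)

end Partition

theorem tendsto_sum_indicator_Ioc_succ_of_mesh {E M : Type*} [TopologicalSpace E] [Sub E]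
    [ContinuousSub E] [TopologicalSpace M] [AddCommMonoid M] {f fl : ℝ → E} {g : E → M} {τ : ℝ}
    (hright : Tendsto f (𝓝[≥] τ) (𝓝 (f τ))) (hleft : Tendsto f (𝓝[<] τ) (𝓝 (fl τ)))
    (hg : ContinuousAt g (f τ - fl τ)) {k : ℕ → ℕ} {t : ℕ → ℕ → ℝ}
    (ht : ∀ n, MonotoneOn (t n) (Iic (k n))) (hτ : ∀ n, τ ∈ Ioc (t n 0) (t n (k n)))
    (hmesh : ∀ ε > 0, ∀ᶠ n in atTop, ∀ j < k n, t n (j + 1) - t n j < ε) :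
    Tendsto (fun n => ∑ j ∈ Finset.range (k n),
        (Ioc (t n j) (t n (j + 1))).indicator (fun _ => g (f (t n (j + 1)) - f (t n j))) τ)
      atTop (𝓝 (g (f τ - fl τ))) := by
  choose J hJk hJ using fun n => exists_lt_mem_Ioc_succ (hτ n)
  obtain ⟨hleftJ, hrightJ⟩ := tendsto_nhdsLT_and_nhdsGE_of_mem_Ioc hJ fun ε hε =>
    (hmesh ε hε).mono fun n hn => hn _ (hJk n)
  have hlim := hg.tendsto.comp ((hright.comp hrightJ).sub (hleft.comp hleftJ))
  exact hlim.congr fun n => (sum_indicator_Ioc_succ_eq_of_mem (ht n) _ (hJk n) (hJ n)).symm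

theorem stmt7_general (s u : ℝ) (f fl : ℝ → ℝ)
    (hright : ∀ t ∈ Ico s u, Tendsto f (nhdsWithin t (Ici t)) (nhds (f t)))
    (hleft : ∀ t ∈ Ioc s u, Tendsto f (nhdsWithin t (Iio t)) (nhds (fl t)))
    (h : ℝ → ℝ) (hcont : Continuous h) (hbdd : ∃ C, ∀ x, |h x| ≤ C) (h0 : h 0 = 0)
    (k : ℕ → ℕ) (t : ℕ → ℕ → ℝ)
    (ht0 : ∀ n, t n 0 = s) (htk : ∀ n, t n (k n) = u)
    (hmono : ∀ n, ∀ j < k n, t n j < t n (j + 1))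
    (hmesh : ∀ ε > 0, ∀ᶠ n in atTop, ∀ j < k n, t n (j + 1) - t n j < ε) :
    Tendsto
      (fun n => ∫ τ in Icc s u,
        (∑ j ∈ Finset.range (k n),
          (Ioc (t n j) (t n (j + 1))).indicator
            (fun _ => h (f (t n (j + 1)) - f (t n j))) τ) ^ 2)
      atTop (nhds 0) := by
  obtain ⟨C, hC⟩ := hbdd
  have ht (n : ℕ) : MonotoneOn (t n) (Iic (k n)) :=
    (strictMonoOn_Iic_of_lt_succ (hmono n)).monotoneOn
  set F := fun n τ => ∑ j ∈ Finset.range (k n),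
    (Ioc (t n j) (t n (j + 1))).indicator (fun _ => h (f (t n (j + 1)) - f (t n j))) τ
  have hF_meas (n : ℕ) : Measurable (F n) :=
    Finset.measurable_sum _ fun j _ => measurable_const.indicator measurableSet_Ioc
  have hF_le (n : ℕ) (τ : ℝ) : |F n τ| ≤ C :=
    norm_sum_indicator_Ioc_succ_le (ht n) (g := fun j => h (f (t n (j + 1)) - f (t n j)))
      (fun _ => hC _) τ
  have hF_tendsto (τ : ℝ) (hτ : τ ∈ Ioo s u) (hfτ : f τ = fl τ) :
      Tendsto (F · τ) atTop (𝓝 0) := by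
    simpa [hfτ, h0] using tendsto_sum_indicator_Ioc_succ_of_mesh (hright τ (Ioo_subset_Ico_self hτ))
      (hleft τ (Ioo_subset_Ioc_self hτ)) hcont.continuousAt ht
      (fun n => by rw [ht0, htk]; exact Ioo_subset_Ioc_self hτ) hmesh
  have hae : ∀ᵐ τ ∂volume.restrict (Icc s u), τ ∈ Ioo s u ∧ f τ = fl τ := by
    rw [Measure.restrict_congr_set Ioo_ae_eq_Icc.symm]
    filter_upwards [ae_restrict_mem measurableSet_Ioo, ae_restrict_of_ae
      ((countable_setOf_ne_leftLim hright hleft).ae_notMem volume)] with τ hτ hjump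
    exact ⟨hτ, not_not.1 fun hne => hjump ⟨hτ, hne⟩⟩
  simpa using tendsto_integral_of_dominated_convergence (fun _ => C ^ 2)
    (fun n => ((hF_meas n).pow_const 2).aestronglyMeasurable)
    (integrableOn_const measure_Icc_lt_top.ne)
    (fun n => .of_forall fun τ => by simpa using pow_le_pow_left₀ (abs_nonneg _) (hF_le n τ) 2)
    (hae.mono fun τ hτ => (hF_tendsto τ hτ.1 hτ.2).pow 2)

/-- Let `s < u`, let `f` be càdlàg on `[s, u]` (right-continuous on `[s,u)` with left limits
`fl t` on `(s,u]`), and let `h : ℝ → ℝ` be continuous and bounded with `h 0 = 0`. For partitions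
`πₙ = {s = t₀ⁿ < ⋯ < t_{kₙ}ⁿ = u}` with mesh tending to `0`,
`∫_s^u (Σ_j 1_{(t_{j−1}ⁿ, t_jⁿ]}(τ) · h(f(t_jⁿ) − f(t_{j−1}ⁿ)))² dτ → 0`. -/
theorem stmt7 (s u : ℝ) (hsu : s < u) (f fl : ℝ → ℝ)
    (hright : ∀ t ∈ Ico s u, Tendsto f (nhdsWithin t (Ici t)) (nhds (f t)))
    (hleft : ∀ t ∈ Ioc s u, Tendsto f (nhdsWithin t (Iio t)) (nhds (fl t)))
    (h : ℝ → ℝ) (hcont : Continuous h) (hbdd : ∃ C, ∀ x, |h x| ≤ C) (h0 : h 0 = 0)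
    (k : ℕ → ℕ) (hk : ∀ n, 1 ≤ k n) (t : ℕ → ℕ → ℝ)
    (ht0 : ∀ n, t n 0 = s) (htk : ∀ n, t n (k n) = u)
    (hmono : ∀ n, ∀ j < k n, t n j < t n (j + 1))
    (hmesh : ∀ ε > 0, ∀ᶠ n in atTop, ∀ j < k n, t n (j + 1) - t n j < ε) :
    Tendsto
      (fun n => ∫ τ in Icc s u,
        (∑ j ∈ Finset.range (k n),
          (Ioc (t n j) (t n (j + 1))).indicator
            (fun _ => h (f (t n (j + 1)) - f (t n j))) τ) ^ 2)
      atTop (nhds 0) :=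
  stmt7_general s u f fl hright hleft h hcont hbdd h0 k t ht0 htk hmono hmesh
end

section
/- Let s < u, let f : [s, u] → ℝ be càdlàg (right-continuous with left limits f(t−)), let φ : ℝ → ℝ be a smooth function with compact support, set ψ(x) := x φ(x), and let ν be a Lévy measure on ℝ, i.e. a Borel measure with ν({0}) = 0 and ∫_ℝ min(x²,1) dν(x) < ∞. For each n, let πₙ = {s = t₀ⁿ < t₁ⁿ < ⋯ < t_{kₙ}ⁿ = u} be a partition of [s, u] with mesh |πₙ| → 0 as n → ∞. Then ∫_{ℝ∖{0}} ∫_s^u Σ_j 1_{(t_{j−1}ⁿ, t_jⁿ]}(t) · [ψ(f(t_jⁿ) − f(t_{j−1}ⁿ) + x) − ψ(f(t_jⁿ) − f(t_{j−1}ⁿ)) − ψ(x)]² dt dν(x) → 0 as n → ∞. -/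
open Filter Set MeasureTheory

lemma aux_countable_of_left_gap {S : Set ℝ}
    (h : ∀ τ ∈ S, ∃ δ > 0, ∀ σ ∈ Ioo (τ - δ) τ, σ ∉ S) : S.Countable := by
  classical
  choose! δ hδpos hδ using h
  have hq : ∀ τ ∈ S, ∃ q : ℚ, (q : ℝ) ∈ Ioo (τ - δ τ) τ := fun τ hτ =>
    exists_rat_btwn (by linarith [hδpos τ hτ])
  choose! q hq using hq
  have hinj : InjOn (fun τ => q τ) S := by
    intro a ha b hb hab
    by_contra hne
    wlog h' : a < b generalizing a b
    · exact this hb ha hab.symm (Ne.symm hne) (lt_of_le_of_ne (not_lt.1 h') (Ne.symm hne))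
    · have hqa := hq a ha
      have hqb := hq b hb
      have hnb : a ∉ Ioo (b - δ b) b := fun hmem => hδ b hb a hmem ha
      have : a ≤ b - δ b := by
        rcases lt_or_ge (b - δ b) a with h1 | h1
        · exact absurd ⟨h1, h'⟩ hnb
        · exact h1
      have : (q a : ℝ) < q b := lt_of_lt_of_le hqa.2 (le_trans this (le_of_lt hqb.1))
      rw [show q a = q b from hab] at this
      exact lt_irrefl _ this
  exact countable_of_injective_of_countable_image hinj (Set.to_countable _)

lemma aux_cadlag_countable (s u : ℝ) (f fl : ℝ → ℝ)
    (hleft : ∀ t ∈ Ioc s u, Tendsto f (nhdsWithin t (Iio t)) (nhds (fl t))) :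
    {τ | τ ∈ Ioc s u ∧ f τ ≠ fl τ}.Countable := by
  have main : ∀ ε : ℝ, 0 < ε → {τ | τ ∈ Ioc s u ∧ ε ≤ |f τ - fl τ|}.Countable := by
    intro ε hε
    apply aux_countable_of_left_gap
    rintro τ ⟨hτ, _⟩
    obtain ⟨δ1, hδ1, hd⟩ := Metric.tendsto_nhdsWithin_nhds.1 (hleft τ hτ) (ε/4) (by linarith)
    refine ⟨min δ1 (τ - s), lt_min hδ1 (by linarith [hτ.1]), ?_⟩
    rintro σ ⟨hσ1, hσ2⟩ ⟨hσmem, hσjump⟩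
    have hσIoc : σ ∈ Ioc s u := ⟨by
        have : τ - min δ1 (τ - s) ≥ τ - (τ - s) := by
          have := min_le_right δ1 (τ - s); linarith
        linarith, le_trans (le_of_lt hσ2) hτ.2⟩
    have hfσ : dist (f σ) (fl τ) < ε/4 := by
      refine hd hσ2 ?_
      rw [Real.dist_eq, abs_of_nonpos (by linarith)]
      have := min_le_left δ1 (τ - s); linarith
    have hflσ : dist (fl σ) (fl τ) ≤ ε/4 := by
      have hev : ∀ᶠ σ' in nhdsWithin σ (Iio σ), dist (f σ') (fl τ) ≤ ε/4 := by
        filter_upwards [Ioo_mem_nhdsLT hσ1] with σ' hσ'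
        refine le_of_lt (hd (lt_trans hσ'.2 hσ2) ?_)
        rw [Real.dist_eq, abs_of_nonpos (by linarith [hσ'.1, hσ'.2, hσ2])]
        have := min_le_left δ1 (τ - s); linarith [hσ'.1]
      exact le_of_tendsto ((hleft σ hσIoc).dist tendsto_const_nhds) hev
    rw [Real.dist_eq] at hfσ hflσ
    have htri : |f σ - fl σ| ≤ |f σ - fl τ| + |fl σ - fl τ| := by
      have := abs_sub_le (f σ) (fl τ) (fl σ)
      rw [abs_sub_comm (fl τ) (fl σ)] at this
      linarith
    linarith
  have hsub : {τ | τ ∈ Ioc s u ∧ f τ ≠ fl τ} ⊆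
      ⋃ m : ℕ, {τ | τ ∈ Ioc s u ∧ 1/(m+1) ≤ |f τ - fl τ|} := by
    rintro τ ⟨hτ, hne⟩
    have hpos : 0 < |f τ - fl τ| := abs_pos.2 (sub_ne_zero.2 hne)
    obtain ⟨m, hm⟩ := exists_nat_one_div_lt hpos
    exact mem_iUnion.2 ⟨m, hτ, le_of_lt hm⟩
  exact Set.Countable.mono hsub (countable_iUnion fun m => main _ (by positivity))

lemma aux_part_le (k : ℕ) (t : ℕ → ℝ) (hmono : ∀ j < k, t j < t (j+1)) :
    ∀ i j, i ≤ j → j ≤ k → t i ≤ t j := by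
  intro i j hij
  induction hij with
  | refl => exact fun _ => le_rfl
  | @step m hm ih =>
    intro hjk
    exact le_trans (ih (le_trans (Nat.le_succ m) hjk))
      (le_of_lt (hmono m (lt_of_lt_of_le (Nat.lt_succ_self m) hjk)))

lemma aux_sum_indicator_zero (k : ℕ) (t : ℕ → ℝ) (s u : ℝ) (hts : ∀ j, j ≤ k → s ≤ t j)
    (htu : ∀ j, j ≤ k → t j ≤ u) (c : ℕ → ℝ) (τ : ℝ) (hτ : τ ∉ Ioc s u) :
    (∑ j ∈ Finset.range k, (Ioc (t j) (t (j+1))).indicator (fun _ => c j) τ) = 0 := by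
  refine Finset.sum_eq_zero fun j hj => indicator_of_notMem (fun hmem => hτ ?_) _
  have hjk := Finset.mem_range.1 hj
  exact ⟨lt_of_le_of_lt (hts j hjk.le) hmem.1, le_trans hmem.2 (htu (j+1) hjk)⟩

lemma aux_sum_indicator (k : ℕ) (hk : 1 ≤ k) (t : ℕ → ℝ) (s u : ℝ)
    (ht0 : t 0 = s) (htk : t k = u)
    (hmono : ∀ j < k, t j < t (j+1)) (c : ℕ → ℝ) (τ : ℝ) (hτ : τ ∈ Ioc s u) :
    ∃ j₀, j₀ < k ∧ τ ∈ Ioc (t j₀) (t (j₀+1)) ∧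
      (∑ j ∈ Finset.range k, (Ioc (t j) (t (j+1))).indicator (fun _ => c j) τ) = c j₀ := by
  classical
  have hle := aux_part_le k t hmono
  obtain ⟨hτ1, hτ2⟩ := hτ
  have hex : ∃ j, τ ≤ t (j + 1) := ⟨k - 1, by rw [Nat.sub_add_cancel hk, htk]; exact hτ2⟩
  set j₀ := Nat.find hex with hj₀def
  have hspec : τ ≤ t (j₀ + 1) := Nat.find_spec hex
  have hj₀k : j₀ < k := by
    have h1 : j₀ ≤ k - 1 := Nat.find_min' hex (by rw [Nat.sub_add_cancel hk, htk]; exact hτ2)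
    exact lt_of_le_of_lt h1 (Nat.sub_lt hk one_pos)
  have hlt : t j₀ < τ := by
    rcases Nat.eq_zero_or_pos j₀ with h0 | hpos
    · rw [h0, ht0]; exact hτ1
    · have hmin := Nat.find_min hex (show j₀ - 1 < j₀ from Nat.sub_lt hpos one_pos)
      rw [Nat.sub_add_cancel hpos] at hmin
      exact not_le.1 hmin
  refine ⟨j₀, hj₀k, ⟨hlt, hspec⟩, ?_⟩
  rw [Finset.sum_eq_single_of_mem j₀ (Finset.mem_range.2 hj₀k) ?_]
  · exact indicator_of_mem (show τ ∈ Ioc (t j₀) (t (j₀+1)) from ⟨hlt, hspec⟩) _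
  · intro i hi hne
    apply indicator_of_notMem
    rcases lt_or_gt_of_ne hne with hlt' | hgt
    · intro hmem
      exact absurd hmem.2 (not_le.2 (lt_of_le_of_lt (hle (i+1) j₀ hlt' (le_of_lt hj₀k)) hlt))
    · intro hmem
      exact absurd hmem.1
        (not_lt.2 (le_trans hspec (hle (j₀+1) i hgt (le_of_lt (Finset.mem_range.1 hi)))))

lemma aux_repr (s u : ℝ) (k : ℕ) (t : ℕ → ℝ) (hts : ∀ j, j ≤ k → s ≤ t j)
    (htu : ∀ j, j ≤ k → t j ≤ u) (hmono : ∀ j < k, t j < t (j+1)) (c : ℕ → ℝ) :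
    (∫ τ in Icc s u, ∑ j ∈ Finset.range k, (Ioc (t j) (t (j+1))).indicator (fun _ => c j) τ)
      = ∑ j ∈ Finset.range k, (t (j+1) - t j) * c j := by
  rw [MeasureTheory.integral_finset_sum]
  · refine Finset.sum_congr rfl fun j hj => ?_
    have hjk := Finset.mem_range.1 hj
    have hsub : Ioc (t j) (t (j+1)) ⊆ Icc s u := fun τ hτ =>
      ⟨le_trans (hts j hjk.le) (le_of_lt hτ.1), le_trans hτ.2 (htu (j+1) hjk)⟩
    rw [integral_indicator measurableSet_Ioc, setIntegral_const, measureReal_def,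
        Measure.restrict_apply measurableSet_Ioc, Set.inter_eq_left.2 hsub, Real.volume_Ioc,
        ENNReal.toReal_ofReal (by linarith [hmono j hjk] : (0:ℝ) ≤ t (j+1) - t j), smul_eq_mul]
  · intro j hj
    exact (integrableOn_const measure_Icc_lt_top.ne).indicator measurableSet_Ioc

lemma aux_inner (s u : ℝ) (hsu : s < u) (f fl : ℝ → ℝ)
    (hright : ∀ τ ∈ Ico s u, Tendsto f (nhdsWithin τ (Ici τ)) (nhds (f τ)))
    (hleft : ∀ τ ∈ Ioc s u, Tendsto f (nhdsWithin τ (Iio τ)) (nhds (fl τ)))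
    (h : ℝ → ℝ) (hhc : Continuous h) (hh0 : h 0 = 0) (M : ℝ)
    (hh1 : ∀ y, 0 ≤ h y) (hh2 : ∀ y, h y ≤ M)
    (k : ℕ → ℕ) (hk : ∀ n, 1 ≤ k n) (t : ℕ → ℕ → ℝ)
    (ht0 : ∀ n, t n 0 = s) (htk : ∀ n, t n (k n) = u)
    (hmono : ∀ n, ∀ j < k n, t n j < t n (j + 1))
    (hmesh : ∀ ε > 0, ∀ᶠ n in atTop, ∀ j < k n, t n (j + 1) - t n j < ε) :
    Tendsto (fun n => ∑ j ∈ Finset.range (k n),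
      (t n (j + 1) - t n j) * h (f (t n (j + 1)) - f (t n j))) atTop (nhds 0) := by
  classical
  have hle : ∀ n, ∀ i j, i ≤ j → j ≤ k n → t n i ≤ t n j :=
    fun n => aux_part_le (k n) (t n) (hmono n)
  have hts : ∀ n, ∀ j, j ≤ k n → s ≤ t n j :=
    fun n j hj => (ht0 n) ▸ hle n 0 j (Nat.zero_le _) hj
  have htu : ∀ n, ∀ j, j ≤ k n → t n j ≤ u :=
    fun n j hj => (htk n) ▸ hle n j (k n) hj le_rfl
  have hrepr : ∀ n, (∑ j ∈ Finset.range (k n),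
        (t n (j+1) - t n j) * h (f (t n (j+1)) - f (t n j)))
      = ∫ τ in Icc s u, ∑ j ∈ Finset.range (k n),
          (Ioc (t n j) (t n (j+1))).indicator (fun _ => h (f (t n (j+1)) - f (t n j))) τ :=
    fun n => (aux_repr s u (k n) (t n) (hts n) (htu n) (hmono n) _).symm
  simp only [hrepr]
  have key := MeasureTheory.tendsto_integral_of_dominated_convergence
      (μ := volume.restrict (Icc s u))
      (F := fun n τ => ∑ j ∈ Finset.range (k n),
        (Ioc (t n j) (t n (j+1))).indicator (fun _ => h (f (t n (j+1)) - f (t n j))) τ)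
      (f := fun _ => (0:ℝ)) (bound := fun _ => M)
      (fun n => (Finset.measurable_sum _ fun j _ =>
        measurable_const.indicator measurableSet_Ioc).aestronglyMeasurable)
      ((integrableOn_const measure_Icc_lt_top.ne))
      ?_ ?_
  · simpa using key
  · intro n
    refine Eventually.of_forall fun τ => ?_
    by_cases hτ : τ ∈ Ioc s u
    · obtain ⟨j₀, _, _, hsum⟩ := aux_sum_indicator (k n) (hk n) (t n) s u (ht0 n) (htk n)
        (hmono n) (fun j => h (f (t n (j+1)) - f (t n j))) τ hτ
      rw [hsum, Real.norm_eq_abs, abs_of_nonneg (hh1 _)]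
      exact hh2 _
    · rw [aux_sum_indicator_zero (k n) (t n) s u (hts n) (htu n) _ τ hτ]
      simpa using le_trans (hh1 0) (hh2 0)
  · have hD : ({τ | τ ∈ Ioc s u ∧ f τ ≠ fl τ} ∪ {u} : Set ℝ).Countable :=
      (aux_cadlag_countable s u f fl hleft).union (countable_singleton u)
    have hae : ∀ᵐ τ ∂(volume.restrict (Icc s u)),
        τ ∉ ({τ | τ ∈ Ioc s u ∧ f τ ≠ fl τ} ∪ {u} : Set ℝ) :=
      ae_restrict_of_ae (measure_eq_zero_iff_ae_notMem.1 (hD.measure_zero volume))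
    filter_upwards [hae] with τ hτ
    by_cases hmem : τ ∈ Ioc s u
    · rw [mem_union, not_or] at hτ
      obtain ⟨hτ1, hτ2⟩ := hτ
      have hfl : f τ = fl τ := by
        by_contra hne; exact hτ1 ⟨hmem, hne⟩
      have hτu : τ < u := lt_of_le_of_ne hmem.2 (by simpa using hτ2)
      rw [Metric.tendsto_nhds]
      intro ε hε
      obtain ⟨δh, hδh, hhδ⟩ := Metric.continuousAt_iff.1 hhc.continuousAt ε hε
      obtain ⟨δ1, hδ1, hd1⟩ := Metric.tendsto_nhdsWithin_nhds.1
        (hright τ ⟨le_of_lt hmem.1, hτu⟩) (δh/2) (by linarith)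
      obtain ⟨δ2, hδ2, hd2⟩ := Metric.tendsto_nhdsWithin_nhds.1
        (hleft τ hmem) (δh/2) (by linarith)
      filter_upwards [hmesh (min δ1 δ2) (lt_min hδ1 hδ2)] with n hn
      obtain ⟨j₀, hj₀k, hmemj, hsum⟩ := aux_sum_indicator (k n) (hk n) (t n) s u (ht0 n)
        (htk n) (hmono n) (fun j => h (f (t n (j+1)) - f (t n j))) τ hmem
      have hmesh' := hn j₀ hj₀k
      have h1 : dist (f (t n (j₀+1))) (f τ) < δh/2 := by
        refine hd1 (mem_Ici.2 hmemj.2) ?_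
        rw [Real.dist_eq, abs_of_nonneg (by linarith [hmemj.2])]
        have := min_le_left δ1 δ2
        linarith [hmemj.1]
      have h2 : dist (f (t n j₀)) (fl τ) < δh/2 := by
        refine hd2 (mem_Iio.2 hmemj.1) ?_
        rw [Real.dist_eq, abs_of_nonpos (by linarith [hmemj.1])]
        have := min_le_right δ1 δ2
        linarith [hmemj.2]
      have hΔ : dist (f (t n (j₀+1)) - f (t n j₀)) 0 < δh := by
        rw [Real.dist_eq, sub_zero]
        rw [Real.dist_eq] at h1 h2
        rw [← hfl] at h2
        have htri : |f (t n (j₀+1)) - f (t n j₀)| ≤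
            |f (t n (j₀+1)) - f τ| + |f (t n j₀) - f τ| := by
          have := abs_sub_le (f (t n (j₀+1))) (f τ) (f (t n j₀))
          rw [abs_sub_comm (f τ) (f (t n j₀))] at this
          linarith
        linarith
      have := hhδ hΔ
      rw [hh0] at this
      rwa [hsum]
    · have hz : ∀ n, (∑ j ∈ Finset.range (k n),
          (Ioc (t n j) (t n (j+1))).indicator
            (fun _ => h (f (t n (j+1)) - f (t n j))) τ) = 0 :=
        fun n => aux_sum_indicator_zero (k n) (t n) s u (hts n) (htu n) _ τ hmem
      simp only [hz]
      exact tendsto_const_nhds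

lemma aux_psi_bound (φ : ℝ → ℝ) (hφ : ContDiff ℝ (⊤ : ℕ∞) φ) (hφsupp : HasCompactSupport φ)
    (ψ : ℝ → ℝ) (hψ : ψ = fun x => x * φ x) :
    ∃ C : ℝ, 0 ≤ C ∧ ∀ y x : ℝ, (ψ (y + x) - ψ y - ψ x)^2 ≤ C * min (x^2) 1 := by
  have hψcd : ContDiff ℝ (⊤ : ℕ∞) ψ := by rw [hψ]; exact contDiff_id.mul hφ
  have hψc : Continuous ψ := hψcd.continuous
  have hψsupp : HasCompactSupport ψ := by rw [hψ]; exact hφsupp.mul_left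
  have hψ0 : ψ 0 = 0 := by rw [hψ]; simp
  obtain ⟨K, hK⟩ := hψcd.lipschitzWith_of_hasCompactSupport hψsupp (by simp)
  obtain ⟨Cb, hCb⟩ := hψsupp.exists_bound_of_continuous hψc
  have hCb0 : (0:ℝ) ≤ Cb := le_trans (norm_nonneg _) (hCb 0)
  refine ⟨max (4 * (K:ℝ)^2) (9 * Cb^2), le_max_of_le_right (by positivity), fun y x => ?_⟩
  have h1 : |ψ (y + x) - ψ y| ≤ K * |x| := by
    have := hK.dist_le_mul (y + x) y
    simpa [Real.dist_eq, add_sub_cancel_left] using this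
  have h2 : |ψ x| ≤ K * |x| := by
    have := hK.dist_le_mul x 0
    simpa [Real.dist_eq, hψ0] using this
  have h3 : |ψ (y + x) - ψ y - ψ x| ≤ 2 * K * |x| := by
    have a := abs_le.1 h1
    have b := abs_le.1 h2
    rw [abs_le]; constructor <;> [linarith [a.1, b.2]; linarith [a.2, b.1]]
  have h4 : |ψ (y + x) - ψ y - ψ x| ≤ 3 * Cb := by
    have a := abs_le.1 (by simpa [Real.norm_eq_abs] using hCb (y + x))
    have b := abs_le.1 (by simpa [Real.norm_eq_abs] using hCb y)
    have c := abs_le.1 (by simpa [Real.norm_eq_abs] using hCb x)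
    rw [abs_le]; constructor <;>
      [linarith [a.1, b.2, c.2]; linarith [a.2, b.1, c.1]]
  have habs : (ψ (y + x) - ψ y - ψ x)^2 = |ψ (y + x) - ψ y - ψ x|^2 := (sq_abs _).symm
  rcases le_total (x^2) 1 with hx | hx
  · rw [min_eq_left hx]
    have e1 : |ψ (y + x) - ψ y - ψ x|^2 ≤ (2 * K * |x|)^2 :=
      pow_le_pow_left₀ (abs_nonneg _) h3 2
    have e2 : (2 * (K:ℝ) * |x|)^2 = 4 * (K:ℝ)^2 * x^2 := by
      rw [mul_pow, mul_pow, sq_abs]; ring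
    calc (ψ (y + x) - ψ y - ψ x)^2 ≤ 4 * (K:ℝ)^2 * x^2 := by rw [habs, ← e2]; exact e1
      _ ≤ max (4 * (K:ℝ)^2) (9 * Cb^2) * x^2 :=
          mul_le_mul_of_nonneg_right (le_max_left _ _) (sq_nonneg x)
  · rw [min_eq_right hx]
    have e1 : |ψ (y + x) - ψ y - ψ x|^2 ≤ (3 * Cb)^2 :=
      pow_le_pow_left₀ (abs_nonneg _) h4 2
    calc (ψ (y + x) - ψ y - ψ x)^2 ≤ (3 * Cb)^2 := by rw [habs]; exact e1
      _ = 9 * Cb^2 := by ring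
      _ ≤ max (4 * (K:ℝ)^2) (9 * Cb^2) * 1 := by rw [mul_one]; exact le_max_right _ _

/-- Let `s < u`, let `f` be càdlàg on `[s, u]`, let `φ` be smooth with compact support,
`ψ(x) = x φ(x)`, and let `ν` be a Lévy measure on `ℝ`. For partitions
`πₙ = {s = t₀ⁿ < ⋯ < t_{kₙ}ⁿ = u}` with mesh tending to `0`,
`∫_{ℝ∖{0}} ∫_s^u Σ_j 1_{(t_{j−1}ⁿ, t_jⁿ]}(τ) · [ψ(Δⱼⁿf + x) − ψ(Δⱼⁿf) − ψ(x)]² dτ dν(x) → 0`. -/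
theorem stmt8 (s u : ℝ) (hsu : s < u) (f fl : ℝ → ℝ)
    (hright : ∀ t ∈ Ico s u, Tendsto f (nhdsWithin t (Ici t)) (nhds (f t)))
    (hleft : ∀ t ∈ Ioc s u, Tendsto f (nhdsWithin t (Iio t)) (nhds (fl t)))
    (φ : ℝ → ℝ) (hφ : ContDiff ℝ (⊤ : ℕ∞) φ) (hφsupp : HasCompactSupport φ)
    (ψ : ℝ → ℝ) (hψ : ψ = fun x => x * φ x)
    (ν : Measure ℝ) (hν0 : ν {0} = 0)
    (hνint : ∫⁻ x, ENNReal.ofReal (min (x ^ 2) 1) ∂ν < ⊤)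
    (k : ℕ → ℕ) (hk : ∀ n, 1 ≤ k n) (t : ℕ → ℕ → ℝ)
    (ht0 : ∀ n, t n 0 = s) (htk : ∀ n, t n (k n) = u)
    (hmono : ∀ n, ∀ j < k n, t n j < t n (j + 1))
    (hmesh : ∀ ε > 0, ∀ᶠ n in atTop, ∀ j < k n, t n (j + 1) - t n j < ε) :
    Tendsto
      (fun n => ∫ x in ({0}ᶜ : Set ℝ),
        (∫ τ in Icc s u,
          ∑ j ∈ Finset.range (k n),
            (Ioc (t n j) (t n (j + 1))).indicator
              (fun _ => (ψ (f (t n (j + 1)) - f (t n j) + x)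
                - ψ (f (t n (j + 1)) - f (t n j)) - ψ x) ^ 2) τ) ∂ν)
      atTop (nhds 0) := by
  classical
  have hψc : Continuous ψ := by rw [hψ]; exact continuous_id.mul hφ.continuous
  have hψ0 : ψ 0 = 0 := by rw [hψ]; simp
  obtain ⟨C2, hC2, hgbound⟩ := aux_psi_bound φ hφ hφsupp ψ hψ
  have hle : ∀ n, ∀ i j, i ≤ j → j ≤ k n → t n i ≤ t n j :=
    fun n => aux_part_le (k n) (t n) (hmono n)
  have hts : ∀ n, ∀ j, j ≤ k n → s ≤ t n j :=
    fun n j hj => (ht0 n) ▸ hle n 0 j (Nat.zero_le _) hj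
  have htu : ∀ n, ∀ j, j ≤ k n → t n j ≤ u :=
    fun n j hj => (htk n) ▸ hle n j (k n) hj le_rfl
  have heq : ∀ n (x : ℝ), (∫ τ in Icc s u,
        ∑ j ∈ Finset.range (k n),
          (Ioc (t n j) (t n (j + 1))).indicator
            (fun _ => (ψ (f (t n (j + 1)) - f (t n j) + x)
              - ψ (f (t n (j + 1)) - f (t n j)) - ψ x) ^ 2) τ)
      = ∑ j ∈ Finset.range (k n), (t n (j + 1) - t n j) *
          (ψ (f (t n (j + 1)) - f (t n j) + x)
            - ψ (f (t n (j + 1)) - f (t n j)) - ψ x) ^ 2 :=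
    fun n x => aux_repr s u (k n) (t n) (hts n) (htu n) (hmono n)
      (fun j => (ψ (f (t n (j + 1)) - f (t n j) + x)
        - ψ (f (t n (j + 1)) - f (t n j)) - ψ x) ^ 2)
  simp only [heq]
  -- dominated convergence over ν
  have hmin_int : Integrable (fun x : ℝ => min (x^2) 1) (ν.restrict {0}ᶜ) := by
    refine ⟨(Continuous.min (continuous_pow 2) continuous_const).aestronglyMeasurable, ?_⟩
    rw [hasFiniteIntegral_iff_ofReal
      (Eventually.of_forall fun x => le_min (sq_nonneg x) zero_le_one)]
    exact lt_of_le_of_lt (lintegral_mono' Measure.restrict_le_self le_rfl) hνint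
  have key := MeasureTheory.tendsto_integral_of_dominated_convergence
      (μ := ν.restrict {0}ᶜ)
      (F := fun n x => ∑ j ∈ Finset.range (k n), (t n (j + 1) - t n j) *
          (ψ (f (t n (j + 1)) - f (t n j) + x)
            - ψ (f (t n (j + 1)) - f (t n j)) - ψ x) ^ 2)
      (f := fun _ => (0:ℝ)) (bound := fun x => C2 * (u - s) * min (x^2) 1)
      ?_ (hmin_int.const_mul (C2 * (u - s))) ?_ ?_
  · simpa using key
  · intro n
    refine Continuous.aestronglyMeasurable ?_
    refine continuous_finset_sum _ fun j _ => Continuous.mul continuous_const ?_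
    exact (((hψc.comp (continuous_const.add continuous_id)).sub continuous_const).sub hψc).pow 2
  · intro n
    refine Eventually.of_forall fun x => ?_
    have hnn : 0 ≤ ∑ j ∈ Finset.range (k n), (t n (j + 1) - t n j) *
        (ψ (f (t n (j + 1)) - f (t n j) + x)
          - ψ (f (t n (j + 1)) - f (t n j)) - ψ x) ^ 2 :=
      Finset.sum_nonneg fun j hj => mul_nonneg
        (le_of_lt (sub_pos.2 (hmono n j (Finset.mem_range.1 hj)))) (sq_nonneg _)
    rw [Real.norm_eq_abs, abs_of_nonneg hnn]
    calc ∑ j ∈ Finset.range (k n), (t n (j + 1) - t n j) *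
          (ψ (f (t n (j + 1)) - f (t n j) + x)
            - ψ (f (t n (j + 1)) - f (t n j)) - ψ x) ^ 2
        ≤ ∑ j ∈ Finset.range (k n), (t n (j + 1) - t n j) * (C2 * min (x^2) 1) :=
          Finset.sum_le_sum fun j hj => mul_le_mul_of_nonneg_left (hgbound _ x)
            (le_of_lt (sub_pos.2 (hmono n j (Finset.mem_range.1 hj))))
      _ = (∑ j ∈ Finset.range (k n), (t n (j + 1) - t n j)) * (C2 * min (x^2) 1) :=
          (Finset.sum_mul _ _ _).symm
      _ = (u - s) * (C2 * min (x^2) 1) := by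
          rw [Finset.sum_range_sub (fun j => t n j), htk n, ht0 n]
      _ = C2 * (u - s) * min (x^2) 1 := by ring
  · refine Eventually.of_forall fun x => ?_
    refine aux_inner s u hsu f fl hright hleft
      (fun y => (ψ (y + x) - ψ y - ψ x) ^ 2)
      ?_ (by simp [hψ0]) C2 (fun y => sq_nonneg _)
      (fun y => le_trans (hgbound y x) (by
        have := min_le_right (x^2) (1:ℝ)
        nlinarith [min_le_right (x^2) (1:ℝ)]))
      k hk t ht0 htk hmono hmesh
    exact (((hψc.comp (continuous_id.add continuous_const)).sub hψc).sub continuous_const).pow 2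
end
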